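/- arXiv:2409.16310 — 3 statements merged into one kernel-verified Lean document; each statement's English description precedes it below -/
import Mathlib

section
/- Let C be a linear code over the finite field F_q that contains a nonzero codeword. Let wt_min be the minimum Hamming weight of a nonzero codeword of C and wt_max the maximum Hamming weight of a codeword of C. If q·wt_min > (q-1)·wt_max, then C is a minimal code. -/
/-!
If `c'` is supported inside `supp c`, then on every coordinate `i ∈ supp c` exactly one
scalar `a` kills `c'_i - a c_i`, so the `q` codewords `c' - a c` have total weight
`(q - 1) wt(c)`. When `c'` is not a multiple of `c` all of them are nonzero, which gives
`q wt_min ≤ (q - 1) wt(c) ≤ (q - 1) wt_max`.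
-/

open Finset

variable {F : Type*} [Field F] [Fintype F] [DecidableEq F]

theorem card_filter_sub_mul_ne_zero (x : F) {y : F} (hy : y ≠ 0) :
    #{a : F | x - a * y ≠ 0} = Fintype.card F - 1 := by
  have hroot : ∀ a : F, x - a * y ≠ 0 ↔ a ≠ x / y := fun a => by
    rw [sub_ne_zero, ne_comm, ne_eq, ne_eq, eq_div_iff hy]
  simp_rw [hroot, filter_ne' univ, card_erase_of_mem (mem_univ _), card_univ]

theorem sum_hammingNorm_sub_smul {ι : Type*} [Fintype ι] {c c' : ι → F}
    (hsupp : ∀ i, c' i ≠ 0 → c i ≠ 0) :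
    ∑ a : F, hammingNorm (c' - a • c) = (Fintype.card F - 1) * hammingNorm c := by
  have hcoord : ∀ i,
      #{a : F | c' i - a * c i ≠ 0} = if c i ≠ 0 then Fintype.card F - 1 else 0 := by
    intro i
    by_cases hci : c i = 0
    · have hc'i : c' i = 0 := by_contra fun h => hsupp i h hci
      simp [hci, hc'i]
    · rw [if_pos hci, card_filter_sub_mul_ne_zero _ hci]
  calc ∑ a : F, hammingNorm (c' - a • c)
      = ∑ i, #{a : F | c' i - a * c i ≠ 0} := by
        simp only [hammingNorm, card_filter]
        exact sum_comm
    _ = (Fintype.card F - 1) * hammingNorm c := by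
        simp only [hcoord, hammingNorm, card_filter, mul_sum, mul_ite, mul_one, mul_zero]

theorem ashikhmin_barg_minimal_general
    {F : Type} [Field F] [Fintype F] [DecidableEq F] (q : ℕ) (hq : Fintype.card F = q)
    {n : ℕ} (C : Submodule F (Fin n → F))
    (wtmin wtmax : ℕ)
    (hmin_le : ∀ c ∈ C, c ≠ 0 → wtmin ≤ hammingNorm c)
    (hmax_le : ∀ c ∈ C, hammingNorm c ≤ wtmax)
    (hAB : q * wtmin > (q - 1) * wtmax) :
    ∀ c ∈ C, c ≠ 0 → ∀ c' ∈ C,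
      (∀ i, c' i ≠ 0 → c i ≠ 0) → ∃ a : F, c' = a • c := by
  intro c hc _ c' hc' hsupp
  by_contra! hnot
  subst hq
  have hlower : Fintype.card F * wtmin ≤ ∑ a : F, hammingNorm (c' - a • c) := by
    rw [← smul_eq_mul, ← card_univ, ← sum_const]
    exact sum_le_sum fun a _ =>
      hmin_le _ (C.sub_mem hc' (C.smul_mem a hc)) (sub_ne_zero.mpr (hnot a))
  have hupper := Nat.mul_le_mul_left (Fintype.card F - 1) (hmax_le c hc)
  rw [sum_hammingNorm_sub_smul hsupp] at hlower
  omega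

/-- **Ashikhmin–Barg condition.**
Let `C` be a linear code over the finite field `F` with `q` elements that contains a
nonzero codeword.  Let `wtmin` be the minimum Hamming weight of a nonzero codeword of
`C` and `wtmax` the maximum Hamming weight of a codeword of `C`.  If
`q * wtmin > (q - 1) * wtmax`, then `C` is a minimal code: every nonzero codeword `c`
of `C` covers (support-wise) only scalar multiples of itself. -/
theorem ashikhmin_barg_minimal
    {F : Type} [Field F] [Fintype F] [DecidableEq F] (q : ℕ) (hq : Fintype.card F = q)
    {n : ℕ} (C : Submodule F (Fin n → F))
    (wtmin wtmax : ℕ)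
    (hmin_le : ∀ c ∈ C, c ≠ 0 → wtmin ≤ hammingNorm c)
    (hmin_mem : ∃ c ∈ C, c ≠ 0 ∧ hammingNorm c = wtmin)
    (hmax_le : ∀ c ∈ C, hammingNorm c ≤ wtmax)
    (hmax_mem : ∃ c ∈ C, hammingNorm c = wtmax)
    (hAB : q * wtmin > (q - 1) * wtmax) :
    ∀ c ∈ C, c ≠ 0 → ∀ c' ∈ C,
      (∀ i, c' i ≠ 0 → c i ≠ 0) → ∃ a : F, c' = a • c :=
  ashikhmin_barg_minimal_general q hq C wtmin wtmax hmin_le hmax_le hAB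
end

section
/- Let T and n be positive integers with T ≤ 2^{n-1}. Then Σ_{i=0}^{n-1} ⌈(2^{n-1}+1-T)/2^i⌉ = 2^n + l(T) - 2T + v_2(T), and Σ_{i=0}^{n-1} ⌈(2^{n-1}-T)/2^i⌉ = 2^n + l(T) - 2T - 1, where l(T) is the number of ones in the binary expansion of T and v_2(T) is the 2-adic valuation of T. -/
/-!
Since `2 ^ i ∣ 2 ^ (n - 1)` for `i < n`, `⌈(2 ^ (n - 1) - x) / 2 ^ i⌉ = 2 ^ (n - 1 - i) - ⌊x / 2 ^ i⌋`,
so both sums equal `2 ^ n - 1 - ∑_{i<n} ⌊x / 2 ^ i⌋`, with `x = T - 1` and `x = T` respectively.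
Legendre's formula `v₂(x!) = x - l(x)` evaluates the floor sum as `2x - l(x)`, and comparing it
for `T!` and `(T - 1)!` gives `l(T - 1) + 1 = l(T) + v₂(T)`.
-/

/-- For a positive integer `T`, `l T` is the number of ones in the binary expansion
of `T` (its binary digit sum). -/
def binaryDigitSum (T : ℕ) : ℕ := (Nat.digits 2 T).sum

open Finset Nat

theorem Rat.ceil_intCast_sub_div_natCast_of_dvd {a : ℤ} (b : ℤ) {d : ℕ} (h : (d : ℤ) ∣ a) :
    ⌈((a : ℚ) - b) / d⌉ = a / d - b / d := by
  obtain ⟨q, rfl⟩ := h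
  rcases eq_or_ne d 0 with rfl | hd
  · simp
  push_cast
  rw [sub_div, mul_div_cancel_left₀ _ (by exact_mod_cast hd), sub_eq_add_neg, Int.ceil_intCast_add,
    Int.ceil_neg, Rat.floor_intCast_div_natCast, Int.mul_ediv_cancel_left _ (by exact_mod_cast hd),
    sub_eq_add_neg]

theorem sum_range_div_two_pow_add_binaryDigitSum {n x : ℕ} (hx : x < 2 ^ n) :
    ∑ i ∈ range n, x / 2 ^ i + binaryDigitSum x = 2 * x := by
  rcases n with _ | n
  · simp_all [binaryDigitSum]
  have hLegendre := sub_one_mul_padicValNat_factorial (p := 2) x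
  rw [padicValNat_factorial (log_lt_of_lt_pow' n.succ_ne_zero hx)] at hLegendre
  have hdigits := digit_sum_le 2 x
  rw [range_eq_Ico, sum_eq_sum_Ico_succ_bot n.succ_pos]
  simp only [binaryDigitSum, pow_zero, Nat.div_one, zero_add] at *
  omega

theorem binaryDigitSum_sub_one_add_one {T : ℕ} (hT : 0 < T) :
    binaryDigitSum (T - 1) + 1 = binaryDigitSum T + padicValNat 2 T := by
  obtain ⟨m, rfl⟩ := exists_eq_add_one_of_ne_zero hT.ne'
  have hfact : padicValNat 2 (m + 1)! = padicValNat 2 (m + 1) + padicValNat 2 m ! := by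
    rw [factorial_succ, padicValNat.mul m.succ_ne_zero (factorial_ne_zero m)]
  have hLegendreSucc := sub_one_mul_padicValNat_factorial (p := 2) (m + 1)
  have hLegendre := sub_one_mul_padicValNat_factorial (p := 2) m
  have hdigitsSucc := digit_sum_le 2 (m + 1)
  have hdigits := digit_sum_le 2 m
  simp only [binaryDigitSum, Nat.add_sub_cancel]
  omega

theorem sum_range_two_pow_sub (n : ℕ) :
    ∑ i ∈ range (n + 1), (2 : ℤ) ^ (n - i) = 2 ^ (n + 1) - 1 := by
  have hreflect := sum_range_reflect (fun i => (2 : ℤ) ^ i) (n + 1)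
  rw [Nat.add_sub_cancel] at hreflect
  rw [hreflect, ← geom_sum_mul (2 : ℤ) (n + 1)]
  ring

theorem sum_range_ceil_two_pow_sub_div {n x : ℕ} (hx : x < 2 ^ (n + 1)) :
    ∑ i ∈ range (n + 1), ⌈((2 : ℚ) ^ n - x) / 2 ^ i⌉
      = 2 ^ (n + 1) - 1 - 2 * (x : ℤ) + binaryDigitSum x := by
  have hterm : ∀ i ∈ range (n + 1),
      ⌈((2 : ℚ) ^ n - x) / 2 ^ i⌉ = (2 : ℤ) ^ (n - i) - (x / 2 ^ i : ℕ) := by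
    intro i hi
    have hi : i ≤ n := Nat.lt_succ_iff.mp (mem_range.mp hi)
    have hdvd : ((2 ^ i : ℕ) : ℤ) ∣ ((2 ^ n : ℕ) : ℤ) :=
      Int.natCast_dvd_natCast.mpr (Nat.pow_dvd_pow 2 hi)
    have h := Rat.ceil_intCast_sub_div_natCast_of_dvd (x : ℤ) hdvd
    rw [← Int.natCast_div, Nat.pow_div hi two_pos] at h
    exact_mod_cast h
  have hfloor := sum_range_div_two_pow_add_binaryDigitSum hx
  rw [sum_congr rfl hterm, sum_sub_distrib, sum_range_two_pow_sub, ← Nat.cast_sum]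
  omega

/-- Let `T` and `n` be positive integers with `T ≤ 2^(n-1)`.  Then
`Σ_{i=0}^{n-1} ⌈(2^(n-1)+1-T)/2^i⌉ = 2^n + l(T) - 2T + v₂(T)` and
`Σ_{i=0}^{n-1} ⌈(2^(n-1)-T)/2^i⌉ = 2^n + l(T) - 2T - 1`,
where `l(T)` is the binary digit sum of `T` and `v₂(T)` is the 2-adic valuation. -/
theorem ceil_sums_binary (T n : ℕ) (hT : 0 < T) (hn : 0 < n) (hTle : T ≤ 2 ^ (n - 1)) :
    (∑ i ∈ Finset.range n, ⌈((2 : ℚ) ^ (n - 1) + 1 - (T : ℚ)) / (2 : ℚ) ^ i⌉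
        = (2 : ℤ) ^ n + (binaryDigitSum T : ℤ) - 2 * (T : ℤ) + (padicValNat 2 T : ℤ)) ∧
    (∑ i ∈ Finset.range n, ⌈((2 : ℚ) ^ (n - 1) - (T : ℚ)) / (2 : ℚ) ^ i⌉
        = (2 : ℤ) ^ n + (binaryDigitSum T : ℤ) - 2 * (T : ℤ) - 1) := by
  obtain ⟨m, rfl⟩ := exists_eq_add_one_of_ne_zero hn.ne'
  rw [Nat.add_sub_cancel] at hTle ⊢
  have hTlt : T < 2 ^ (m + 1) := hTle.trans_lt (pow_lt_pow_right₀ one_lt_two m.lt_succ_self)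
  have hshift : (2 : ℚ) ^ m + 1 - T = 2 ^ m - ((T - 1 : ℕ) : ℚ) := by
    rw [Nat.cast_sub hT]; ring
  have hdigits := binaryDigitSum_sub_one_add_one hT
  refine ⟨?_, ?_⟩
  · rw [hshift, sum_range_ceil_two_pow_sub_div (by omega)]
    omega
  · rw [sum_range_ceil_two_pow_sub_div hTlt]
    ring
end

section
/- Let n ≥ 2 and let f : F_2^n → F_2 be the Boolean function with f(x) = 1 if and only if x ≠ 0. Then the binary code C_f = { (s·f(x) + u·x)_{x ∈ F_2^n \ {0}} : s ∈ F_2, u ∈ F_2^n } is a [2^n - 1, n+1, 2^{n-1} - 1] binary linear code meeting the Griesmer bound with equality. -/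
/-!
On nonzero points `f = 1`, so `C_f` is the first-order Reed–Muller code punctured at the origin:
the evaluations of the affine functions `x ↦ s + u ⬝ᵥ x` on `F_2^n \ {0}`. For `u ≠ 0` the
kernel of `x ↦ u ⬝ᵥ x` is a hyperplane with `2^(n-1)` points, so the codeword of `(0, u)` has
weight `2^(n-1)` and that of `(1, u)` has weight `2^(n-1) - 1` (the origin is removed from the
hyperplane), while `(1, 0)` gives the all-one word. Every nonzero codeword therefore has weight at
least `2^(n-1) - 1 > 0`, which also makes the encoding `(s, u) ↦ c_f(s, u)` injective. The
Griesmer sum is a geometric series once `⌈(2^m - 1) / 2^i⌉ = 2^(m-i)` for `1 ≤ i ≤ m + 1`.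
-/

open Finset

/-- Griesmer equality: a linear code of length `N`, dimension `k` and minimum distance
`d` over a field with `q` elements meets the Griesmer bound with equality if
`Σ_{i=0}^{k-1} ⌈d / q^i⌉ = N`. -/
def griesmerEq (q N k d : ℕ) : Prop :=
  ∑ i ∈ Finset.range k, ⌈(d : ℚ) / (q : ℚ) ^ i⌉ = (N : ℤ)

theorem hammingNorm_subtype_ne_add {α β : Type*} [Fintype α] [DecidableEq α] [Zero β]
    [DecidableEq β] (g : α → β) (a : α) :
    hammingNorm (fun x : {x // x ≠ a} => g x) + (if g a = 0 then 0 else 1) = hammingNorm g := by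
  simp only [hammingNorm, card_filter]
  rw [Fintype.sum_eq_add_sum_subtype_ne _ a]
  split_ifs <;> simp_all [add_comm]

theorem Module.Dual.natCard_ker_mul_natCard {K V : Type*} [Field K] [AddCommGroup V]
    [Module K V] [FiniteDimensional K V] {φ : Module.Dual K V} (hφ : φ ≠ 0) :
    Nat.card (LinearMap.ker φ) * Nat.card K = Nat.card V := by
  rw [Module.natCard_eq_pow_finrank (K := K) (V := LinearMap.ker φ),
    Module.natCard_eq_pow_finrank (K := K) (V := V), ← φ.finrank_ker_add_one_of_ne_zero hφ,
    pow_succ]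

def affineEval (K : Type*) [CommSemiring K] {ι : Type*} {n : ℕ} (p : ι → Fin n → K) :
    K × (Fin n → K) →ₗ[K] ι → K where
  toFun su i := su.1 + su.2 ⬝ᵥ p i
  map_add' _ _ := by
    ext; simp only [Prod.fst_add, Prod.snd_add, add_dotProduct, Pi.add_apply]; ring
  map_smul' _ _ := by ext; simp [mul_add]

section Binary

variable {n : ℕ}

theorem card_dotProduct_eq_zero {u : Fin n → ZMod 2} (hu : u ≠ 0) :
    #{x | u ⬝ᵥ x = 0} = 2 ^ (n - 1) := by
  have hker := Module.Dual.natCard_ker_mul_natCard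
    ((dotProductEquiv (ZMod 2) (Fin n)).map_ne_zero_iff.2 hu)
  have hcard : Nat.card (LinearMap.ker (dotProductEquiv (ZMod 2) (Fin n) u)) =
      #{x | u ⬝ᵥ x = 0} := by
    rw [← Fintype.card_subtype, ← Nat.card_eq_fintype_card]; rfl
  obtain ⟨i, -⟩ := Function.ne_iff.1 hu
  obtain ⟨m, rfl⟩ := Nat.exists_eq_add_one.2 i.pos
  simp only [hcard, Nat.card_zmod, Nat.card_fun, Nat.card_fin, pow_succ] at hker
  simpa using hker

theorem card_dotProduct_ne_zero {u : Fin n → ZMod 2} (hu : u ≠ 0) :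
    #{x | u ⬝ᵥ x ≠ 0} = 2 ^ (n - 1) := by
  have h := card_filter_add_card_filter_not (s := univ) (fun x : Fin n → ZMod 2 => u ⬝ᵥ x = 0)
  obtain ⟨i, -⟩ := Function.ne_iff.1 hu
  obtain ⟨m, rfl⟩ := Nat.exists_eq_add_one.2 i.pos
  rw [card_dotProduct_eq_zero hu, card_univ, Fintype.card_fun, ZMod.card, Fintype.card_fin,
    add_tsub_cancel_right, pow_succ] at h
  rw [add_tsub_cancel_right]
  simp only [ne_eq]
  omega

theorem hammingNorm_punctured_dotProduct (u : Fin n → ZMod 2) :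
    hammingNorm (fun x : {x : Fin n → ZMod 2 // x ≠ 0} => u ⬝ᵥ x.1) =
      #{x | u ⬝ᵥ x ≠ 0} := by
  simpa [hammingNorm] using hammingNorm_subtype_ne_add (u ⬝ᵥ ·) 0

theorem hammingNorm_punctured_one_add_dotProduct {u : Fin n → ZMod 2} (hu : u ≠ 0) :
    hammingNorm (fun x : {x : Fin n → ZMod 2 // x ≠ 0} => 1 + u ⬝ᵥ x.1) =
      2 ^ (n - 1) - 1 := by
  have one_add_ne_zero : ∀ a : ZMod 2, 1 + a ≠ 0 ↔ a = 0 := by decide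
  have hg : hammingNorm (1 + u ⬝ᵥ ·) = #{x | u ⬝ᵥ x = 0} := by
    simp only [hammingNorm, one_add_ne_zero]
  have h := hammingNorm_subtype_ne_add (1 + u ⬝ᵥ ·) 0
  simp only [dotProduct_zero, add_zero, one_ne_zero, if_false, hg, card_dotProduct_eq_zero hu] at h
  omega

theorem le_hammingNorm_punctured_affine {s : ZMod 2} {u : Fin n → ZMod 2} (hsu : (s, u) ≠ 0) :
    2 ^ (n - 1) - 1 ≤
      hammingNorm (fun x : {x : Fin n → ZMod 2 // x ≠ 0} => s + u ⬝ᵥ x.1) := by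
  obtain rfl | rfl := (by decide : ∀ s : ZMod 2, s = 0 ∨ s = 1) s
  · have hu : u ≠ 0 := by simpa using hsu
    simp only [zero_add, hammingNorm_punctured_dotProduct, card_dotProduct_ne_zero hu]
    exact Nat.sub_le _ _
  by_cases hu : u = 0
  · have hall : hammingNorm (fun x : {x : Fin n → ZMod 2 // x ≠ 0} => 1 + u ⬝ᵥ x.1) =
        2 ^ n - 1 := by
      simp [hu, hammingNorm]
    rw [hall]
    exact Nat.sub_le_sub_right (Nat.pow_le_pow_right two_pos (Nat.sub_le n 1)) 1
  · rw [hammingNorm_punctured_one_add_dotProduct hu]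

theorem affineEval_punctured_injective (hn : 2 ≤ n) :
    Function.Injective
      (affineEval (ZMod 2) (Subtype.val : {x : Fin n → ZMod 2 // x ≠ 0} → _)) := by
  rw [← LinearMap.ker_eq_bot, LinearMap.ker_eq_bot']
  rintro ⟨s, u⟩ hsu
  by_contra h
  have hle := le_hammingNorm_punctured_affine h
  rw [show (fun x : {x : Fin n → ZMod 2 // x ≠ 0} => s + u ⬝ᵥ x.1) = 0 from hsu,
    hammingNorm_zero] at hle
  have := Nat.one_lt_two_pow (n := n - 1) (by omega)
  omega

end Binary

theorem ceil_two_pow_sub_one_div_two_pow {m i : ℕ} (hm : 1 ≤ m) (hi : 1 ≤ i)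
    (him : i ≤ m + 1) :
    ⌈((2 ^ m - 1 : ℕ) : ℚ) / 2 ^ i⌉ = 2 ^ (m - i) := by
  have h2i : (2 : ℚ) ≤ 2 ^ i := le_self_pow₀ one_le_two (by omega)
  rw [Nat.cast_sub Nat.one_le_two_pow, Int.ceil_eq_iff, lt_div_iff₀ (by positivity),
    div_le_iff₀ (by positivity)]
  push_cast
  rcases Nat.lt_or_ge m i with hmi | hmi
  · obtain rfl : i = m + 1 := by omega
    have h2m : (2 : ℚ) ≤ 2 ^ m := le_self_pow₀ one_le_two (by omega)
    rw [Nat.sub_eq_zero_of_le m.le_succ, pow_zero, pow_succ]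
    constructor <;> linarith
  · obtain ⟨k, rfl⟩ := Nat.exists_eq_add_of_le hmi
    simp only [add_tsub_cancel_left, pow_add]
    constructor <;> nlinarith

theorem griesmerEq_two_pow {m : ℕ} (hm : 1 ≤ m) :
    griesmerEq 2 (2 ^ (m + 1) - 1) (m + 2) (2 ^ m - 1) := by
  have hterm : ∀ i ∈ range (m + 1),
      ⌈((2 ^ m - 1 : ℕ) : ℚ) / 2 ^ (i + 1)⌉ = 2 ^ (m - (i + 1)) :=
    fun i hi => ceil_two_pow_sub_one_div_two_pow hm (by omega) (by simp at hi; omega)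
  have hgeom : ∑ i ∈ range m, (2 : ℤ) ^ (m - (i + 1)) = 2 ^ m - 1 := by
    rw [← sum_range_reflect, ← mul_one (∑ i ∈ range m, _), ← geom_sum_mul 2 m]
    refine congrArg (· * _) (sum_congr rfl fun j hj => ?_)
    rw [mem_range] at hj
    congr 1
    omega
  unfold griesmerEq
  rw [Nat.cast_ofNat, sum_range_succ', sum_congr rfl hterm, sum_range_succ, hgeom, pow_zero,
    div_one, Int.ceil_natCast, Nat.sub_eq_zero_of_le m.le_succ, pow_zero]
  push_cast [Nat.one_le_two_pow]
  ring

/-- Let `n ≥ 2` and let `f : F_2^n → F_2` be the Boolean function with `f x = 1` iff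
`x ≠ 0`.  Then the binary code
`C_f = { (s·f(x) + u·x)_{x ∈ F_2^n \ {0}} : s ∈ F_2, u ∈ F_2^n }`
is a `[2^n - 1, n+1, 2^(n-1) - 1]` binary linear code meeting the Griesmer bound
with equality. -/
theorem boolean_code_optimal (n : ℕ) (hn : 2 ≤ n)
    (f : (Fin n → ZMod 2) → ZMod 2) (hf : ∀ x, f x = 1 ↔ x ≠ 0)
    (C : Submodule (ZMod 2) ({x : Fin n → ZMod 2 // x ≠ 0} → ZMod 2))
    (hC : (C : Set ({x : Fin n → ZMod 2 // x ≠ 0} → ZMod 2)) =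
      {c | ∃ (s : ZMod 2) (u : Fin n → ZMod 2),
        c = fun x => s * f x.1 + ∑ i, u i * x.1 i}) :
    Fintype.card {x : Fin n → ZMod 2 // x ≠ 0} = 2 ^ n - 1 ∧
    Module.finrank (ZMod 2) C = n + 1 ∧
    (∀ c ∈ C, c ≠ 0 → 2 ^ (n - 1) - 1 ≤ hammingNorm c) ∧
    (∃ c ∈ C, c ≠ 0 ∧ hammingNorm c = 2 ^ (n - 1) - 1) ∧
    griesmerEq 2 (2 ^ n - 1) (n + 1) (2 ^ (n - 1) - 1) := by
  set L := affineEval (ZMod 2) (Subtype.val : {x : Fin n → ZMod 2 // x ≠ 0} → _)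
  have hCL : C = LinearMap.range L := by
    refine SetLike.coe_injective (hC.trans ?_)
    ext c
    simp only [Set.mem_ofPred_eq, LinearMap.coe_range, Set.mem_range, Prod.exists, eq_comm (a := c)]
    refine exists₂_congr fun s u => Eq.congr_left (funext fun x => ?_)
    simp [L, affineEval, (hf x.1).2 x.2, dotProduct]
  subst hCL
  have e0 : (Pi.single ⟨0, by omega⟩ 1 : Fin n → ZMod 2) ≠ 0 := by simp
  have hw : hammingNorm (L (1, Pi.single ⟨0, by omega⟩ 1)) = 2 ^ (n - 1) - 1 :=
    hammingNorm_punctured_one_add_dotProduct e0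
  refine ⟨by simp [Fintype.card_subtype_compl], ?_, ?_, ?_, ?_⟩
  · rw [LinearMap.finrank_range_of_inj (affineEval_punctured_injective hn)]
    simp [add_comm]
  · rintro _ ⟨⟨s, u⟩, rfl⟩ hc
    exact le_hammingNorm_punctured_affine (by rintro h; simp [h] at hc)
  · refine ⟨_, LinearMap.mem_range_self _ _, ?_, hw⟩
    rw [← hammingNorm_ne_zero_iff, hw]
    have := Nat.one_lt_two_pow (n := n - 1) (by omega)
    omega
  · obtain ⟨m, rfl⟩ := Nat.exists_eq_add_one.2 (by omega : 0 < n)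
    exact griesmerEq_two_pow (by omega)
end
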